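/- The map g is well-defined: every lattice path x ∈ L_{2k,k} \ D_{2k}^k has at least d_0(x)+1 D-steps touching the line y=0. Similarly, h' is well-defined: every lattice path x ∈ L_{2k,k+1} has at least u_1(x)+1 U-steps touching the line y=1. -/

import Mathlib

/-- Value of a step: `true` = U-step (+1), `false` = D-step (-1). -/
def stepVal (b : Bool) : ℤ := if b then 1 else -1

/-- Height of the lattice path `x` after its first `i` steps. -/
def pathHeight (x : List Bool) (i : ℕ) : ℤ := ((x.take i).map stepVal).sum

/-- The step at position `i` (0-indexed) is a U-step. -/
def isU (x : List Bool) (i : ℕ) : Bool := x.getD i true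

/-- The step at position `i` (0-indexed) is a D-step. -/
def isD (x : List Bool) (i : ℕ) : Bool := !(x.getD i true)

/-- Number of flaws: D-steps lying below the line y=0 (i.e. starting at height ≤ 0). -/
def flaws (x : List Bool) : ℕ :=
  ((List.range x.length).filter (fun i => isD x i && decide (pathHeight x i ≤ 0))).length

/-- `DyckSet k e` = the set `D_{2k}^e` of Dyck paths with `2k` steps and `e` flaws. -/
def DyckSet (k e : ℕ) : Set (List Bool) :=
  {x | x.length = 2*k ∧ x.count true = k ∧ flaws x = e}

/-- `LSet k m` = the set `L_{2k,m}` of lattice paths with `2k` steps and `m` U-steps. -/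
def LSet (k m : ℕ) : Set (List Bool) :=
  {x | x.length = 2*k ∧ x.count true = m}

/-- `d_c(x)`: number of D-steps of `x` starting on the line `y = c`. -/
def dstart (x : List Bool) (c : ℤ) : ℕ :=
  ((List.range x.length).filter (fun i => isD x i && decide (pathHeight x i = c))).length

/-- `u_c(x)`: number of U-steps of `x` starting on the line `y = c`. -/
def ustart (x : List Bool) (c : ℤ) : ℕ :=
  ((List.range x.length).filter (fun i => isU x i && decide (pathHeight x i = c))).length

/-- Positions (in increasing order) of D-steps of `x` touching the line `y = c`
(a D-step at position `i` goes from height `pathHeight x i` down to `pathHeight x i - 1`,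
so it touches `y = c` iff its start height is `c` or `c+1`). -/
def dtouch (x : List Bool) (c : ℤ) : List ℕ :=
  (List.range x.length).filter
    (fun i => isD x i && (decide (pathHeight x i = c) || decide (pathHeight x i = c+1)))

/-- Positions (in increasing order) of U-steps of `x` touching the line `y = c`
(a U-step at position `i` goes from height `pathHeight x i` up to `pathHeight x i + 1`,
so it touches `y = c` iff its start height is `c` or `c-1`). -/
def utouch (x : List Bool) (c : ℤ) : List ℕ :=
  (List.range x.length).filter
    (fun i => isU x i && (decide (pathHeight x i = c) || decide (pathHeight x i = c-1)))

/-- Position (0-indexed) flipped by `g`: the `(d_0(x)+1)`-th D-step touching `y=0`. -/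
def gIdx (x : List Bool) : ℕ := (dtouch x 0).getD (dstart x 0) 0

/-- The map `g`: flip the `(d_0(x)+1)`-th D-step of `x` touching the line `y=0`. -/
def gMap (x : List Bool) : List Bool := x.set (gIdx x) true

/-- Position (0-indexed) flipped by `h`: the `u_1(x)`-th U-step touching `y=1`. -/
def hIdx (x : List Bool) : ℕ := (utouch x 1).getD (ustart x 1 - 1) 0

/-- The map `h`: flip the `u_1(x)`-th U-step of `x` touching the line `y=1`. -/
def hMap (x : List Bool) : List Bool := x.set (hIdx x) false

/-- Position (0-indexed) flipped by `g'`: the `d_0(x)`-th D-step touching `y=0`. -/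
def g'Idx (x : List Bool) : ℕ := (dtouch x 0).getD (dstart x 0 - 1) 0

/-- The map `g'`: flip the `d_0(x)`-th D-step of `x` touching the line `y=0`. -/
def g'Map (x : List Bool) : List Bool := x.set (g'Idx x) true

/-- Position (0-indexed) flipped by `h'`: the `(u_1(x)+1)`-th U-step touching `y=1`. -/
def h'Idx (x : List Bool) : ℕ := (utouch x 1).getD (ustart x 1) 0

/-- The map `h'`: flip the `(u_1(x)+1)`-th U-step of `x` touching the line `y=1`. -/
def h'Map (x : List Bool) : List Bool := x.set (h'Idx x) false

/-- The minimum-change map `f := h ∘ g`. -/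
def fMap (x : List Bool) : List Bool := hMap (gMap x)

/-- `piSeq n x`: the sequence of (1-indexed) positions flipped by the successive
applications `g, h, g, h, ...` over `n` applications of `f` starting from `x`. -/
def piSeq : ℕ → List Bool → List ℕ
  | 0, _ => []
  | n+1, x => (gIdx x + 1) :: (hIdx (gMap x) + 1) :: piSeq n (fMap x)

/-- Reverse the step sequence and complement every step. -/
def revComp (x : List Bool) : List Bool := x.reverse.map (fun b => !b)

/-! The D-steps touching `y = 0` are those starting at height `0` or `1`, so it suffices to find
a D-step starting at height `1`. A path outside `D_{2k}^k` has fewer flaws than D-steps, hence a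
D-step starting above `y = 0`; since the path ends at height `0`, it must afterwards step down
from `1` to `0`. Dually, the U-steps touching `y = 1` are those starting at height `1` or `0`, and
a path from height `0` to height `2` must step up from `0` to `1`. -/

theorem length_filter_or_of_disjoint {α : Type*} {p q : α → Bool} (l : List α)
    (h : ∀ a ∈ l, ¬(p a ∧ q a)) :
    (l.filter (fun a => p a || q a)).length = (l.filter p).length + (l.filter q).length := by
  induction l with
  | nil => rfl
  | cons a t ih =>
    have ha := h a List.mem_cons_self
    have ht := ih fun b hb => h b (List.mem_cons_of_mem a hb)
    cases hp : p a <;> cases hq : q a <;> simp_all <;> omega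

theorem map_getD_range (x : List Bool) :
    (List.range x.length).map (fun i => x.getD i true) = x :=
  List.ext_getElem (by simp) fun i _ hi => by simp [List.getElem?_eq_getElem hi]

theorem pathHeight_succ_of_lt {x : List Bool} {i : ℕ} (h : i < x.length) :
    pathHeight x (i + 1) = pathHeight x i + stepVal (isU x i) := by
  unfold pathHeight isU
  rw [List.map_take, List.map_take, List.sum_take_succ _ i (by simpa using h)]
  simp [List.getElem?_eq_getElem h]

theorem pathHeight_of_length_le {x : List Bool} {i : ℕ} (h : x.length ≤ i) :
    pathHeight x i = pathHeight x x.length := by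
  simp [pathHeight, List.take_of_length_le h]

theorem pathHeight_length (x : List Bool) :
    pathHeight x x.length = x.count true - x.count false := by
  induction x with
  | nil => rfl
  | cons a t ih =>
    simp only [pathHeight, List.take_length] at ih ⊢
    cases a <;> simp [stepVal, ih] <;> ring

theorem abs_pathHeight_succ_sub_le (x : List Bool) (i : ℕ) :
    |pathHeight x (i + 1) - pathHeight x i| ≤ 1 := by
  rcases lt_or_ge i x.length with h | h
  · rw [pathHeight_succ_of_lt h]
    cases isU x i <;> simp [stepVal]
  · rw [pathHeight_of_length_le h, pathHeight_of_length_le (by omega : x.length ≤ i + 1)]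
    simp

theorem lt_length_of_pathHeight_succ_ne {x : List Bool} {i : ℕ}
    (h : pathHeight x (i + 1) ≠ pathHeight x i) : i < x.length := by
  by_contra! hi
  exact h <| (pathHeight_of_length_le (by omega)).trans (pathHeight_of_length_le hi).symm

theorem isU_of_pathHeight_lt_succ {x : List Bool} {i : ℕ}
    (h : pathHeight x i < pathHeight x (i + 1)) : isU x i = true := by
  rw [pathHeight_succ_of_lt (lt_length_of_pathHeight_succ_ne h.ne')] at h
  cases hU : isU x i <;> simp_all [stepVal]

theorem isD_of_pathHeight_succ_lt {x : List Bool} {i : ℕ}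
    (h : pathHeight x (i + 1) < pathHeight x i) : isD x i = true := by
  rw [pathHeight_succ_of_lt (lt_length_of_pathHeight_succ_ne h.ne)] at h
  cases hU : isU x i <;> simp_all [stepVal, isD, isU]

theorem exists_upcrossing {f : ℕ → ℤ} (hf : ∀ n, f (n + 1) ≤ f n + 1) {a b : ℕ} {c : ℤ}
    (hab : a ≤ b) (ha : f a ≤ c) (hb : c < f b) :
    ∃ j, a ≤ j ∧ j < b ∧ f j = c ∧ c < f (j + 1) := by
  induction b, hab using Nat.le_induction with
  | base => omega
  | succ b hab ih =>
    by_cases hcb : c < f b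
    · obtain ⟨j, haj, hjb, hj⟩ := ih hcb
      exact ⟨j, haj, by omega, hj⟩
    · exact ⟨b, hab, by omega, by have := hf b; omega, hb⟩

theorem ustart_pos_of_pathHeight_le_of_lt {x : List Bool} {a b : ℕ} {c : ℤ} (hab : a ≤ b)
    (ha : pathHeight x a ≤ c) (hb : c < pathHeight x b) : 0 < ustart x c := by
  have hf n : pathHeight x (n + 1) ≤ pathHeight x n + 1 :=
    by linarith [(abs_le.1 (abs_pathHeight_succ_sub_le x n)).2]
  obtain ⟨j, -, -, hj, hup⟩ := exists_upcrossing hf hab ha hb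
  rw [← hj] at hup
  refine List.length_pos_of_mem (a := j) (List.mem_filter.2 ⟨List.mem_range.2 ?_, ?_⟩)
  · exact lt_length_of_pathHeight_succ_ne hup.ne'
  · simp [isU_of_pathHeight_lt_succ hup, hj]

theorem dstart_pos_of_lt_pathHeight_of_le {x : List Bool} {a b : ℕ} {c : ℤ} (hab : a ≤ b)
    (ha : c < pathHeight x a) (hb : pathHeight x b ≤ c) : 0 < dstart x (c + 1) := by
  have hf n : -pathHeight x (n + 1) ≤ -pathHeight x n + 1 :=
    by linarith [(abs_le.1 (abs_pathHeight_succ_sub_le x n)).1]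
  obtain ⟨j, -, -, hj, hdown⟩ :=
    exists_upcrossing (f := fun n => -pathHeight x n) (c := -(c + 1)) hf hab (by omega) (by omega)
  have hdown : pathHeight x (j + 1) < pathHeight x j := by omega
  refine List.length_pos_of_mem (a := j) (List.mem_filter.2 ⟨List.mem_range.2 ?_, ?_⟩)
  · exact lt_length_of_pathHeight_succ_ne hdown.ne
  · simp [isD_of_pathHeight_succ_lt hdown]
    omega

theorem length_dtouch (x : List Bool) (c : ℤ) :
    (dtouch x c).length = dstart x c + dstart x (c + 1) := by
  unfold dtouch dstart
  simp only [Bool.and_or_distrib_left]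
  exact length_filter_or_of_disjoint _ fun i _ h => by simp at h; omega

theorem length_utouch (x : List Bool) (c : ℤ) :
    (utouch x c).length = ustart x c + ustart x (c - 1) := by
  unfold utouch ustart
  simp only [Bool.and_or_distrib_left]
  exact length_filter_or_of_disjoint _ fun i _ h => by simp at h; omega

theorem length_filter_isD (x : List Bool) :
    ((List.range x.length).filter (isD x)).length = x.count false := by
  rw [← List.countP_eq_length_filter, List.count]
  conv_rhs => rw [← map_getD_range x, List.countP_map]
  refine List.countP_congr fun i _ => ?_
  cases x.getD i true <;> simp [isD]

theorem exists_isD_pathHeight_pos_of_flaws_ne {x : List Bool} (h : flaws x ≠ x.count false) :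
    ∃ i < x.length, isD x i ∧ 0 < pathHeight x i := by
  contrapose! h
  rw [flaws, ← length_filter_isD]
  congr 1
  refine List.filter_congr fun i hi => ?_
  cases hD : isD x i
  · rfl
  · simpa using h i (List.mem_range.1 hi) hD

theorem g_h'_well_defined (k : ℕ) :
    (∀ x ∈ LSet k k \ DyckSet k k, dstart x 0 + 1 ≤ (dtouch x 0).length) ∧
    (∀ x ∈ LSet k (k+1), ustart x 1 + 1 ≤ (utouch x 1).length) := by
  have hcount := List.count_true_add_count_false
  refine ⟨?_, ?_⟩
  · rintro x ⟨⟨hlen, hU⟩, hx⟩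
    have hD : x.count false = k := by have := hcount x; omega
    obtain ⟨i, hi, -, hpos⟩ :=
      exists_isD_pathHeight_pos_of_flaws_ne fun h => hx ⟨hlen, hU, h.trans hD⟩
    have hend : pathHeight x x.length = 0 := by rw [pathHeight_length]; omega
    have hstep := dstart_pos_of_lt_pathHeight_of_le hi.le hpos hend.le
    rw [length_dtouch]
    omega
  · rintro x ⟨hlen, hU⟩
    have hend : pathHeight x x.length = 2 := by
      rw [pathHeight_length]; have := hcount x; omega
    have hstep := ustart_pos_of_pathHeight_le_of_lt (c := 0) (Nat.zero_le _) le_rfl (hend ▸ two_pos)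
    rw [length_utouch, sub_self]
    omega
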